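/- Let Γ be a finite connected multigraph, v0 a vertex of Γ, and μ a degree-d polarization on Γ. If (E,D) is a (v0,μ)-quasistable degree-d pseudo-divisor on Γ with |E| < b1(Γ), then there exists a (v0,μ)-quasistable degree-d pseudo-divisor (E',D') on Γ with E ⊆ E', |E'| = |E| + 1, and such that (E',D') specializes to (E,D), i.e., (E',D') ≥ (E,D) in QD_{v0,μ}(Γ). -/

import Mathlib

/-- A finite multigraph: each edge has two (possibly equal) endpoints
(loops and parallel edges are allowed). -/
structure Multigraph where
  V : Type
  E : Type
  [fV : Fintype V]
  [dV : DecidableEq V]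
  [fE : Fintype E]
  [dE : DecidableEq E]
  ends1 : E → V
  ends2 : E → V

attribute [instance] Multigraph.fV Multigraph.dV Multigraph.fE Multigraph.dE

namespace Multigraph

variable (G : Multigraph)

/-- The edge `e` joins the vertices `v` and `w`. -/
def Joins (e : G.E) (v w : G.V) : Prop :=
  (G.ends1 e = v ∧ G.ends2 e = w) ∨ (G.ends1 e = w ∧ G.ends2 e = v)

instance (e : G.E) (v w : G.V) : Decidable (G.Joins e v w) := by
  unfold Joins; infer_instance

/-- `E(A,B)`: the set of edges joining a vertex of `A ∖ B` to a vertex of `B ∖ A`. -/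
def betweenSet (A B : Finset G.V) : Finset G.E :=
  Finset.univ.filter fun e => ∃ v ∈ A \ B, ∃ w ∈ B \ A, G.Joins e v w

/-- `δ_A := |E(A, Aᶜ)|`. -/
def delta (A : Finset G.V) : ℕ := (G.betweenSet A Aᶜ).card

/-- One step along an edge belonging to `S`. -/
def Step (S : Set G.E) (v w : G.V) : Prop := ∃ e ∈ S, G.Joins e v w

/-- The spanning subgraph with edge set `S` is connected. -/
def ConnectedOn (S : Set G.E) : Prop :=
  ∀ v w : G.V, Relation.ReflTransGen (G.Step S) v w

def Connected : Prop := G.ConnectedOn Set.univ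

/-- A spanning tree: a subset of edges making a connected spanning subgraph whose number
of edges equals the number of vertices minus one. -/
def IsSpanningTree (T : Finset G.E) : Prop :=
  G.ConnectedOn ↑T ∧ T.card + 1 = Fintype.card G.V

/-- First Betti number of a connected graph. -/
def firstBetti : ℕ := Fintype.card G.E + 1 - Fintype.card G.V

/-- Degree of a divisor. -/
def deg (D : G.V → ℤ) : ℤ := ∑ v, D v

/-- A degree-`d` polarization. -/
def IsPolarization (μ : G.V → ℝ) (d : ℤ) : Prop := (∑ v, μ v) = (d : ℝ)

/-- `β_D(A) = deg(D|_A) - μ(A) + δ_A / 2`. -/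
noncomputable def beta (μ : G.V → ℝ) (D : G.V → ℤ) (A : Finset G.V) : ℝ :=
  (∑ v ∈ A, (D v : ℝ)) - (∑ v ∈ A, μ v) + (G.delta A : ℝ) / 2

/-- `D` is `(v0,μ)`-quasistable: `β_D(A) ≥ 0` for every proper subset `A` of the vertices,
with strict inequality whenever `v0 ∈ A`. -/
def Quasistable (μ : G.V → ℝ) (v0 : G.V) (D : G.V → ℤ) : Prop :=
  ∀ A : Finset G.V, A ⊂ Finset.univ →
    0 ≤ G.beta μ D A ∧ (v0 ∈ A → 0 < G.beta μ D A)

/-- Number of incidences of `v` with edges in `S` (loops counted twice). -/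
def valIn (S : Finset G.E) (v : G.V) : ℕ :=
  ∑ e ∈ S, ((if G.ends1 e = v then 1 else 0) + (if G.ends2 e = v then 1 else 0))

/-- Valence of a vertex (loops counted twice). -/
def val (v : G.V) : ℕ := G.valIn Finset.univ v

/-- The vertices of the `S`-subdivision: original vertices plus one exceptional vertex
for each edge in `S`. -/
abbrev subV (S : Finset G.E) : Type := G.V ⊕ {e : G.E // e ∈ S}

/-- The `S`-subdivision of `G`: each edge `e ∈ S` is replaced by two edges meeting at a new
exceptional vertex. -/
def subdiv (S : Finset G.E) : Multigraph where
  V := G.subV S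
  E := {e : G.E // e ∉ S} ⊕ ({e : G.E // e ∈ S} × Bool)
  ends1 := fun e => match e with
    | Sum.inl x => Sum.inl (G.ends1 x.1)
    | Sum.inr (x, false) => Sum.inl (G.ends1 x.1)
    | Sum.inr (x, true) => Sum.inr x
  ends2 := fun e => match e with
    | Sum.inl x => Sum.inl (G.ends2 x.1)
    | Sum.inr (x, false) => Sum.inr x
    | Sum.inr (x, true) => Sum.inl (G.ends2 x.1)

/-- The polarization `μ^S` on the `S`-subdivision: `μ` on old vertices, `0` on
exceptional vertices. -/
noncomputable def subPol (S : Finset G.E) (μ : G.V → ℝ) : G.subV S → ℝ :=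
  Sum.elim μ fun _ => 0

/-- A divisor on the `S`-subdivision is a pseudo-divisor when it takes value `-1` at
every exceptional vertex. -/
def IsPseudoDivisor (S : Finset G.E) (D : G.subV S → ℤ) : Prop :=
  ∀ x : {e : G.E // e ∈ S}, D (Sum.inr x) = -1

/-- `(S,D)` is a `(v0,μ)`-quasistable degree-`d` pseudo-divisor on `G`. -/
def QSPseudo (μ : G.V → ℝ) (v0 : G.V) (d : ℤ) (S : Finset G.E)
    (D : G.subV S → ℤ) : Prop :=
  G.IsPseudoDivisor S D ∧ (∑ v, D v) = d ∧
    (G.subdiv S).Quasistable (G.subPol S μ) (Sum.inl v0) D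

/-- The graph obtained by deleting the edges in `S`. -/
def deleteEdges (S : Finset G.E) : Multigraph where
  V := G.V
  E := {e : G.E // e ∉ S}
  ends1 := fun e => G.ends1 e.1
  ends2 := fun e => G.ends2 e.1

/-- A pseudo-divisor on `G`: a subset of edges together with a divisor on the associated
subdivision. -/
def PD : Type := Σ S : Finset G.E, (G.subV S → ℤ)

variable {G}

/-- The specialization (partial) order on pseudo-divisors on a fixed graph:
`PDLe x y` holds when `y` specializes to `x`, i.e. `x.1 ⊆ y.1` and there is a
specialization `Γ^{y.1} → Γ^{x.1}` compatible with the identity of `Γ` (each exceptional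
vertex over an edge of `y.1 ∖ x.1` is merged into one of the two endpoints of that edge)
carrying `y.2` to `x.2`. -/
def PDLe (x y : G.PD) : Prop :=
  ∃ h : x.1 ⊆ y.1, ∃ c : G.E → G.V,
    (∀ e ∈ y.1 \ x.1, c e = G.ends1 e ∨ c e = G.ends2 e) ∧
    (∀ v : G.V, x.2 (Sum.inl v) =
      y.2 (Sum.inl v) + ∑ e ∈ (y.1 \ x.1).attach,
        (if c e.1 = v then y.2 (Sum.inr ⟨e.1, (Finset.mem_sdiff.mp e.2).1⟩) else 0)) ∧
    (∀ (e : G.E) (hx : e ∈ x.1), x.2 (Sum.inr ⟨e, hx⟩) = y.2 (Sum.inr ⟨e, h hx⟩))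

/-- Strict specialization order on pseudo-divisors. -/
def PDLt (x y : G.PD) : Prop := PDLe x y ∧ x ≠ y

variable (G)

/-- The set `QD_{v0,μ}(G)` of `(v0,μ)`-quasistable degree-`d` pseudo-divisors on `G`. -/
def QDSet (μ : G.V → ℝ) (v0 : G.V) (d : ℤ) : Set G.PD :=
  {x | G.QSPseudo μ v0 d x.1 x.2}

end Multigraph

/-- A specialization `G → G'` of multigraphs: the contraction of a subset of the edges of
`G`. It is encoded by the map `vmap` on vertices and the identification `emap` of the
edges of `G'` with the non-contracted edges of `G`; the fibers of `vmap` are exactly the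
connected components spanned by contracted edges. -/
structure Multigraph.Spec (G G' : Multigraph) where
  vmap : G.V → G'.V
  emap : G'.E → G.E
  emap_inj : Function.Injective emap
  vmap_surj : Function.Surjective vmap
  joins_comm : ∀ e' : G'.E,
    G'.Joins e' (vmap (G.ends1 (emap e'))) (vmap (G.ends2 (emap e')))
  glue : ∀ e : G.E, (¬ ∃ e', emap e' = e) → vmap (G.ends1 e) = vmap (G.ends2 e)
  fiber_conn : ∀ v w : G.V, vmap v = vmap w →
    Relation.ReflTransGen
      (fun a b => ∃ e : G.E, (¬ ∃ e', emap e' = e) ∧ G.Joins e a b) v w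

namespace Multigraph.Spec

variable {G G' : Multigraph} (f : Multigraph.Spec G G')

/-- The set of edges contracted by the specialization. -/
def contracted : Finset G.E := Finset.univ.filter fun e => ¬ ∃ e', f.emap e' = e

/-- Pushforward of a polarization. -/
noncomputable def pushPol (μ : G.V → ℝ) : G'.V → ℝ := fun v' => ∑ v, if f.vmap v = v' then μ v else 0

/-- Pushforward of a divisor. -/
def pushDiv (D : G.V → ℤ) : G'.V → ℤ := fun v' => ∑ v, if f.vmap v = v' then D v else 0

/-- The edge set `S ∩ E(G')` of the pushforward of a pseudo-divisor `(S,D)`. -/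
def pushEdges (S : Finset G.E) : Finset G'.E :=
  Finset.univ.filter fun e' => f.emap e' ∈ S

/-- Pushforward of the divisor part of a pseudo-divisor `(S,D)` along the induced
specialization `G^S → G'^{S ∩ E(G')}`. -/
def pushPDFun (S : Finset G.E) (D : G.subV S → ℤ) :
    G'.subV (f.pushEdges S) → ℤ
  | Sum.inl v' => (∑ v, if f.vmap v = v' then D (Sum.inl v) else 0) +
      ∑ e ∈ S.attach,
        (if e.1 ∈ f.contracted ∧ f.vmap (G.ends1 e.1) = v' then D (Sum.inr e) else 0)
  | Sum.inr x => D (Sum.inr ⟨f.emap x.1, (Finset.mem_filter.mp x.2).2⟩)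

/-- Pushforward of a pseudo-divisor along a specialization. -/
def pushPD (x : G.PD) : G'.PD := ⟨f.pushEdges x.1, f.pushPDFun x.1 x.2⟩

end Multigraph.Spec

open Multigraph

/-!
Since `|E| < b₁(Γ)`, the edges of `Γ` outside `E` contain a cycle, which survives in `Γ^E`.
Call a proper set `W` of vertices of `Γ^E` a barrier if `β_D(W) ≤ 1`, with `β_D(W) < 1` unless
`v₀ ∈ W`. If an edge `e` of the cycle, oriented `t → h`, is such that no barrier contains `t` but
not `h`, then subdividing `e` and moving the chip of the new exceptional vertex to `h` keeps `D`
quasistable, and the result specializes to `(E, D)`.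

Such an edge exists by uncrossing. By submodularity of `β`, if an edge joins `W \ X` to `X \ W`
for barriers `W` and `X`, then `W ∩ X` and (if proper) `W ∪ X` are barriers, and no two edges
can do so. Hence if every edge of the cycle were separated in both directions, the separating
barriers could be chosen not to split an arc of the cycle growing one edge at a time, until the
arc contains both ends of an edge that they separate.
-/

namespace Multigraph

open Finset Relation

variable {G : Multigraph}

theorem Joins.symm {e : G.E} {v w : G.V} (h : G.Joins e v w) : G.Joins e w v := Or.symm h

theorem joins_ends (e : G.E) : G.Joins e (G.ends1 e) (G.ends2 e) := Or.inl ⟨rfl, rfl⟩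

theorem Joins.ends_mem_iff {e : G.E} {a b : G.V} (h : G.Joins e a b) (S : Finset G.V) :
    G.ends1 e ∈ S ∧ G.ends2 e ∈ S ↔ a ∈ S ∧ b ∈ S := by
  rcases h with ⟨rfl, rfl⟩ | ⟨rfl, rfl⟩ <;> tauto

instance (S : Set G.E) : Std.Symm (G.Step S) := ⟨fun _ _ ⟨e, he, h⟩ => ⟨e, he, h.symm⟩⟩

theorem step_mono {S T : Set G.E} (h : S ⊆ T) : G.Step S ≤ G.Step T :=
  fun _ _ ⟨e, he, hj⟩ => ⟨e, h he, hj⟩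

/-- `Quot (G.Step F)` is the set of connected components of the spanning subgraph with edge
set `F`. -/
theorem card_quot_step_insert_lt {F : Set G.E} {e : G.E}
    (he : ¬ ReflTransGen (G.Step F) (G.ends1 e) (G.ends2 e)) :
    Nat.card (Quot (G.Step (insert e F))) < Nat.card (Quot (G.Step F)) := by
  let f : Quot (G.Step F) → Quot (G.Step (insert e F)) :=
    Quot.map id (step_mono (Set.subset_insert e F))
  have hsurj : Function.Surjective f := by
    rintro ⟨v⟩
    exact ⟨Quot.mk _ v, rfl⟩
  have hninj : ¬ Function.Injective f := fun hinj => he <| by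
    have hglue : f (Quot.mk _ (G.ends1 e)) = f (Quot.mk _ (G.ends2 e)) :=
      Quot.sound ⟨e, Set.mem_insert e F, joins_ends e⟩
    rw [← EqvGen.eqvGen_eq_reflTransGen, ← Quot.eq]
    exact hinj hglue
  have := Fintype.ofFinite (Quot (G.Step F))
  have := Fintype.ofFinite (Quot (G.Step (insert e F)))
  simpa only [Nat.card_eq_fintype_card] using
    Fintype.card_lt_of_surjective_not_injective f hsurj hninj

theorem card_add_card_quot_step_le (F : Finset G.E)
    (hbridge : ∀ e ∈ F, ¬ ReflTransGen (G.Step ↑(F.erase e)) (G.ends1 e) (G.ends2 e)) :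
    #F + Nat.card (Quot (G.Step ↑F)) ≤ Fintype.card G.V := by
  induction F using Finset.induction_on with
  | empty =>
    simpa [Nat.card_eq_fintype_card] using
      Nat.card_le_card_of_surjective _ (Quot.mk_surjective (r := G.Step ↑(∅ : Finset G.E)))
  | insert e F he ih =>
    have hF : ∀ e' ∈ F, ¬ ReflTransGen (G.Step ↑(F.erase e')) (G.ends1 e') (G.ends2 e') :=
      fun e' he' hreach => hbridge e' (mem_insert_of_mem he') <|
        ReflTransGen.mono (step_mono (coe_subset.mpr (erase_subset_erase e' (subset_insert e F))))
          _ _ hreach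
    have hlt := card_quot_step_insert_lt (F := ↑F) (e := e)
      (by simpa [erase_insert he] using hbridge e (mem_insert_self e F))
    rw [card_insert_of_notMem he, coe_insert]
    have := ih hF
    omega

theorem exists_reflTransGen_erase_of_card_le [Nonempty G.V] (F : Finset G.E)
    (hF : Fintype.card G.V ≤ #F) :
    ∃ e ∈ F, ReflTransGen (G.Step ↑(F.erase e)) (G.ends1 e) (G.ends2 e) := by
  by_contra! hbridge
  have := card_add_card_quot_step_le F hbridge
  have : Nonempty (Quot (G.Step ↑F)) := ⟨Quot.mk _ (Classical.arbitrary G.V)⟩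
  have : 0 < Nat.card (Quot (G.Step ↑F)) := Nat.card_pos
  omega

open Classical in
noncomputable def xorInd (p q : Prop) : ℕ := if (p ∧ ¬q) ∨ (q ∧ ¬p) then 1 else 0

noncomputable def crossInd (A : Finset G.V) (e : G.E) : ℕ :=
  xorInd (G.ends1 e ∈ A) (G.ends2 e ∈ A)

def crossBetween (A B : Finset G.V) (e : G.E) : ℕ :=
  if (G.ends1 e ∈ A ∧ G.ends1 e ∉ B ∧ G.ends2 e ∈ B ∧ G.ends2 e ∉ A) ∨
     (G.ends2 e ∈ A ∧ G.ends2 e ∉ B ∧ G.ends1 e ∈ B ∧ G.ends1 e ∉ A) then 1 else 0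

def numCrossBetween (A B : Finset G.V) : ℕ := ∑ e, crossBetween A B e

theorem delta_eq_sum_crossInd (A : Finset G.V) : G.delta A = ∑ e, crossInd A e := by
  rw [delta, betweenSet, card_filter]
  refine sum_congr rfl fun e _ => ?_
  rw [crossInd, xorInd]
  congr 1
  apply propext
  constructor
  · rintro ⟨v, hv, w, hw, (⟨rfl, rfl⟩ | ⟨rfl, rfl⟩)⟩ <;> simp_all
  · rintro (⟨h1, h2⟩ | ⟨h1, h2⟩)
    · exact ⟨_, by simp [h1], _, by simp [h2], joins_ends e⟩
    · exact ⟨_, by simp [h1], _, by simp [h2], (joins_ends e).symm⟩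

theorem crossInd_add_crossInd (A B : Finset G.V) (e : G.E) :
    crossInd A e + crossInd B e =
      crossInd (A ∪ B) e + crossInd (A ∩ B) e + 2 * crossBetween A B e := by
  unfold crossInd xorInd crossBetween
  by_cases h1 : G.ends1 e ∈ A <;> by_cases h2 : G.ends1 e ∈ B <;>
    by_cases h3 : G.ends2 e ∈ A <;> by_cases h4 : G.ends2 e ∈ B <;> simp [h1, h2, h3, h4]

theorem beta_add_beta (μ : G.V → ℝ) (D : G.V → ℤ) (A B : Finset G.V) :
    G.beta μ D A + G.beta μ D B =
      G.beta μ D (A ∪ B) + G.beta μ D (A ∩ B) + numCrossBetween A B := by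
  have hδ : G.delta A + G.delta B =
      G.delta (A ∪ B) + G.delta (A ∩ B) + 2 * numCrossBetween A B := by
    simp only [delta_eq_sum_crossInd, numCrossBetween, mul_sum, ← sum_add_distrib]
    exact sum_congr rfl fun e _ => crossInd_add_crossInd A B e
  have hδR : (G.delta A : ℝ) + G.delta B =
      G.delta (A ∪ B) + G.delta (A ∩ B) + 2 * (numCrossBetween A B : ℝ) := by
    exact_mod_cast hδ
  have hD : ∑ v ∈ A ∪ B, (D v : ℝ) + ∑ v ∈ A ∩ B, (D v : ℝ) =
      ∑ v ∈ A, (D v : ℝ) + ∑ v ∈ B, (D v : ℝ) := sum_union_inter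
  have hμ : ∑ v ∈ A ∪ B, μ v + ∑ v ∈ A ∩ B, μ v = ∑ v ∈ A, μ v + ∑ v ∈ B, μ v :=
    sum_union_inter
  simp only [beta]
  linarith

theorem crossBetween_eq_one {A B : Finset G.V} {e : G.E} {a b : G.V} (hj : G.Joins e a b)
    (ha : a ∈ A) (ha' : a ∉ B) (hb : b ∈ B) (hb' : b ∉ A) : crossBetween A B e = 1 := by
  rcases hj with ⟨rfl, rfl⟩ | ⟨rfl, rfl⟩ <;> simp [crossBetween, ha, ha', hb, hb']

theorem one_le_numCrossBetween {A B : Finset G.V} {e : G.E} (h : crossBetween A B e = 1) :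
    1 ≤ numCrossBetween A B :=
  h ▸ single_le_sum (fun _ _ => Nat.zero_le _) (mem_univ e)

theorem two_le_numCrossBetween {A B : Finset G.V} {e f : G.E} (hef : e ≠ f)
    (he : crossBetween A B e = 1) (hf : crossBetween A B f = 1) : 2 ≤ numCrossBetween A B := by
  have := sum_le_sum_of_subset (f := crossBetween A B) (subset_univ {e, f})
  rwa [sum_pair hef, he, hf] at this

theorem beta_univ_eq_zero {μ : G.V → ℝ} {D : G.V → ℤ} {d : ℤ} (hμ : G.IsPolarization μ d)
    (hD : ∑ v, D v = d) : G.beta μ D univ = 0 := by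
  have hδ : G.delta univ = 0 := by
    simp [delta, betweenSet]
  rw [beta, hδ, hμ, ← hD]
  push_cast
  ring

section Barriers

variable {μ : G.V → ℝ} {D : G.V → ℤ} {v0 : G.V} {W X : Finset G.V}

variable (μ D v0) in
/-- A proper set `W` on which the quasistability inequality of `D` would fail after moving
one chip out of `W`. -/
def IsBarrier (W : Finset G.V) : Prop :=
  W ⊂ univ ∧ G.beta μ D W ≤ 1 ∧ (v0 ∈ W ∨ G.beta μ D W < 1)

variable (μ D v0) in
def IsSeparated (S : Finset G.V) (t v : G.V) : Prop :=
  ∃ W, IsBarrier μ D v0 W ∧ t ∈ W ∧ v ∉ W ∧ (S ⊆ W ∨ Disjoint S W)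

theorem beta_nonneg (hD : G.Quasistable μ v0 D) (hβ : G.beta μ D univ = 0) (W : Finset G.V) :
    0 ≤ G.beta μ D W := by
  rcases (subset_univ W).ssubset_or_eq with h | rfl
  · exact (hD W h).1
  · exact hβ.ge

theorem IsBarrier.union (hD : G.Quasistable μ v0 D) (hW : IsBarrier μ D v0 W)
    (hX : IsBarrier μ D v0 X) (hcr : 1 ≤ numCrossBetween W X) (hU : W ∪ X ⊂ univ) :
    IsBarrier μ D v0 (W ∪ X) := by
  have key := beta_add_beta μ D W X
  have hI := (hD (W ∩ X) (inter_subset_left.trans_ssubset hW.1)).1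
  have hcrR : (1 : ℝ) ≤ numCrossBetween W X := by exact_mod_cast hcr
  refine ⟨hU, by linarith [hW.2.1, hX.2.1], ?_⟩
  rcases hW.2.2 with h | h
  · exact .inl (mem_union_left _ h)
  · exact .inr (by linarith [hX.2.1])

theorem IsBarrier.inter (hD : G.Quasistable μ v0 D) (hβ : G.beta μ D univ = 0)
    (hW : IsBarrier μ D v0 W) (hX : IsBarrier μ D v0 X) (hcr : 1 ≤ numCrossBetween W X) :
    IsBarrier μ D v0 (W ∩ X) := by
  have key := beta_add_beta μ D W X
  have hU := beta_nonneg hD hβ (W ∪ X)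
  have hcrR : (1 : ℝ) ≤ numCrossBetween W X := by exact_mod_cast hcr
  refine ⟨inter_subset_left.trans_ssubset hW.1, by linarith [hW.2.1, hX.2.1], ?_⟩
  rcases hW.2.2, hX.2.2 with ⟨hW' | hW', hX' | hX'⟩
  · exact .inl (mem_inter.mpr ⟨hW', hX'⟩)
  all_goals exact .inr (by linarith [hW.2.1, hX.2.1])

theorem IsBarrier.numCrossBetween_lt_two (hD : G.Quasistable μ v0 D)
    (hβ : G.beta μ D univ = 0) (hW : IsBarrier μ D v0 W) (hX : IsBarrier μ D v0 X) :
    numCrossBetween W X < 2 := by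
  by_contra! hcr
  have key := beta_add_beta μ D W X
  have hU := beta_nonneg hD hβ (W ∪ X)
  have hI := hD (W ∩ X) (inter_subset_left.trans_ssubset hW.1)
  have hcrR : (2 : ℝ) ≤ numCrossBetween W X := by exact_mod_cast hcr
  rcases hW.2.2, hX.2.2 with ⟨hW' | hW', hX' | hX'⟩
  · linarith [hI.2 (mem_inter.mpr ⟨hW', hX'⟩), hW.2.1, hX.2.1]
  all_goals linarith [hI.1, hW.2.1, hX.2.1]

theorem IsBarrier.isSeparated_of_crossBetween (hD : G.Quasistable μ v0 D)
    (hβ : G.beta μ D univ = 0) (hW : IsBarrier μ D v0 W) (hX : IsBarrier μ D v0 X)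
    {e f : G.E} {t v : G.V} (hef : e ≠ f)
    (hf : crossBetween W X f = 1) (he : G.Joins e t v) (htW : t ∈ W) (hvW : v ∉ W)
    {T : Finset G.V} (hTU : T ⊆ W ∪ X) (hTI : Disjoint T (W ∩ X)) :
    IsSeparated μ D v0 T t v := by
  have hcr := one_le_numCrossBetween hf
  by_cases hvX : v ∈ X
  · by_cases htX : t ∈ X
    · exact ⟨W ∩ X, hW.inter hD hβ hX hcr, mem_inter.mpr ⟨htW, htX⟩, by simp [hvW], .inr hTI⟩
    · have := hW.numCrossBetween_lt_two hD hβ hX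
      have := two_le_numCrossBetween hef (crossBetween_eq_one he htW htX hvX hvW) hf
      omega
  · have hvU : v ∉ W ∪ X := by simp [hvW, hvX]
    exact ⟨W ∪ X, hW.union hD hX hcr (ssubset_univ_iff.mpr fun hU => hvU (hU ▸ mem_univ v)),
      mem_union_left _ htW, hvU, .inl hTU⟩

/-- The barrier separating `t` from `v` is uncrossed with one of the two barriers separating
the ends of `f`. -/
theorem IsSeparated.insert (hD : G.Quasistable μ v0 D) (hβ : G.beta μ D univ = 0)
    {e f : G.E} {S : Finset G.V} {s z t v : G.V} (htv : IsSeparated μ D v0 S t v)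
    (he : G.Joins e t v) (hef : e ≠ f) (hf : G.Joins f s z) (hs : s ∈ S)
    (hsz : IsSeparated μ D v0 S s z) (hzs : IsSeparated μ D v0 S z s) :
    IsSeparated μ D v0 (insert z S) t v := by
  obtain ⟨P, hP, hsP, hzP, hSP⟩ := hsz
  replace hSP : S ⊆ P := hSP.resolve_right (not_disjoint_iff.mpr ⟨s, hs, hsP⟩)
  obtain ⟨Q, hQ, hzQ, hsQ, hSQ⟩ := hzs
  replace hSQ : Disjoint S Q := hSQ.resolve_left fun h => hsQ (h hs)
  obtain ⟨W, hW, htW, hvW, hSW | hSW⟩ := htv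
  · by_cases hzW : z ∈ W
    · exact ⟨W, hW, htW, hvW, .inl (insert_subset hzW hSW)⟩
    · exact hW.isSeparated_of_crossBetween hD hβ hQ hef
        (crossBetween_eq_one hf (hSW hs) hsQ hzQ hzW) he htW hvW
        (insert_subset (mem_union_right _ hzQ) (hSW.trans subset_union_left))
        (disjoint_insert_left.mpr ⟨by simp [hzW], hSQ.mono_right inter_subset_right⟩)
  · by_cases hzW : z ∈ W
    · exact hW.isSeparated_of_crossBetween hD hβ hP hef
        (crossBetween_eq_one hf.symm hzW hzP hsP (disjoint_left.mp hSW hs)) he htW hvW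
        (insert_subset (mem_union_left _ hzW) (hSP.trans subset_union_right))
        (disjoint_insert_left.mpr ⟨by simp [hzP], hSW.mono_right inter_subset_left⟩)
    · exact ⟨W, hW, htW, hvW, .inr (disjoint_insert_left.mpr ⟨hzW, hSW⟩)⟩

variable (μ D v0) in
def SeparatedOutside (F : Set G.E) (e₀ : G.E) (S : Finset G.V) : Prop :=
  ∀ e ∈ F, (e = e₀ ∨ ¬ (G.ends1 e ∈ S ∧ G.ends2 e ∈ S)) →
    ∀ t v, G.Joins e t v → IsSeparated μ D v0 S t v

theorem SeparatedOutside.insert (hD : G.Quasistable μ v0 D) (hβ : G.beta μ D univ = 0)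
    {F : Set G.E} {e₀ f : G.E} {S : Finset G.V} {s z : G.V}
    (hS : SeparatedOutside μ D v0 F e₀ S) (hfF : f ∈ F) (hfe : f ≠ e₀) (hf : G.Joins f s z)
    (hs : s ∈ S) : SeparatedOutside μ D v0 F e₀ (insert z S) := by
  by_cases hz : z ∈ S
  · rwa [insert_eq_of_mem hz]
  have hf_out : ¬ (G.ends1 f ∈ S ∧ G.ends2 f ∈ S) := by
    rw [hf.ends_mem_iff]; exact fun h => hz h.2
  intro e he hout t v hj
  have hef : e ≠ f := by
    rintro rfl
    rcases hout with rfl | hin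
    · exact hfe rfl
    · exact hin ((hf.ends_mem_iff _).mpr ⟨mem_insert_of_mem hs, mem_insert_self z S⟩)
  have hout' : e = e₀ ∨ ¬ (G.ends1 e ∈ S ∧ G.ends2 e ∈ S) :=
    hout.imp_right fun h h' => h ⟨mem_insert_of_mem h'.1, mem_insert_of_mem h'.2⟩
  exact (hS e he hout' t v hj).insert hD hβ hj hef hf hs (hS f hfF (.inr hf_out) s z hf)
    (hS f hfF (.inr hf_out) z s hf.symm)

/-- `S` grows from `a` along the path to `b`; once it contains both, the barrier separating `a`
from `b` would have to split it. -/
theorem exists_joins_not_isSeparated (hD : G.Quasistable μ v0 D) (hβ : G.beta μ D univ = 0)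
    {F : Set G.E} {e₀ : G.E} {a b : G.V} (he₀ : e₀ ∈ F) (hj : G.Joins e₀ a b)
    (hab : ReflTransGen (G.Step (F \ {e₀})) a b) :
    ∃ e ∈ F, ∃ t v, G.Joins e t v ∧ ¬ IsSeparated μ D v0 ∅ t v := by
  by_contra! hsep
  have hgrow : ∀ w, ReflTransGen (G.Step (F \ {e₀})) a w →
      ∃ S, a ∈ S ∧ w ∈ S ∧ SeparatedOutside μ D v0 F e₀ S := by
    intro w hw
    induction hw with
    | refl =>
      refine ⟨{a}, mem_singleton_self a, mem_singleton_self a, fun e he _ t v hj => ?_⟩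
      obtain ⟨W, hW, htW, hvW, -⟩ := hsep e he t v hj
      by_cases ha : a ∈ W
      · exact ⟨W, hW, htW, hvW, .inl (singleton_subset_iff.mpr ha)⟩
      · exact ⟨W, hW, htW, hvW, .inr (disjoint_singleton_left.mpr ha)⟩
    | tail _ hstep ih =>
      obtain ⟨S, haS, hwS, hS⟩ := ih
      obtain ⟨f, ⟨hfF, hfe⟩, hf⟩ := hstep
      exact ⟨_, mem_insert_of_mem haS, mem_insert_self _ S, hS.insert hD hβ hfF hfe hf hwS⟩
  obtain ⟨S, haS, hbS, hS⟩ := hgrow b hab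
  obtain ⟨W, -, haW, hbW, hSW | hSW⟩ := hS e₀ he₀ (.inl rfl) a b hj
  · exact hbW (hSW hbS)
  · exact disjoint_left.mp hSW haS haW

theorem one_le_beta_of_not_isSeparated {t v : G.V} (h : ¬ IsSeparated μ D v0 ∅ t v)
    {W : Finset G.V} (hW : W ⊂ univ) (htW : t ∈ W) (hvW : v ∉ W) :
    1 ≤ G.beta μ D W ∧ (v0 ∈ W → 1 < G.beta μ D W) := by
  have hnb : ¬ IsBarrier μ D v0 W := fun hb => h ⟨W, hb, htW, hvW, .inl (empty_subset W)⟩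
  simp only [IsBarrier, hW, true_and, not_and, not_or, not_lt] at hnb
  by_cases h1 : G.beta μ D W ≤ 1
  · exact ⟨(hnb h1).2, fun hv => absurd hv (hnb h1).1⟩
  · exact ⟨by linarith, fun _ => by linarith⟩

end Barriers

section Subdivision

variable {S : Finset G.E} {e₀ : G.E}

variable (S) in
noncomputable def subdivCrossInd (A : Finset (G.subV S)) (e : G.E) : ℕ :=
  if he : e ∈ S then
    xorInd (Sum.inl (G.ends1 e) ∈ A) (Sum.inr ⟨e, he⟩ ∈ A) +
      xorInd (Sum.inr ⟨e, he⟩ ∈ A) (Sum.inl (G.ends2 e) ∈ A)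
  else xorInd (Sum.inl (G.ends1 e) ∈ A) (Sum.inl (G.ends2 e) ∈ A)

theorem delta_subdiv_eq_sum (A : Finset (G.subV S)) :
    (G.subdiv S).delta A = ∑ e, subdivCrossInd S A e := by
  rw [← Fintype.sum_subtype_add_sum_subtype (· ∈ S)]
  refine (delta_eq_sum_crossInd (G := G.subdiv S) A).trans <| (Fintype.sum_sum_type _).trans ?_
  rw [Fintype.sum_prod_type, add_comm]
  congr 1 <;> congr 1
  · -- the two sides carry different `Fintype` instances on `{e // e ∈ S}`
    congr 1
    exact Subsingleton.elim _ _
  · funext x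
    rw [Fintype.sum_bool, subdivCrossInd, dif_pos x.2, add_comm]
    rfl
  · funext x
    rw [subdivCrossInd, dif_neg x.2]
    rfl

variable (S e₀) in
def liftV : G.subV S → G.subV (insert e₀ S) :=
  Sum.map id fun x => ⟨x.1, mem_insert_of_mem x.2⟩

variable (S e₀) in
def newVertex : G.subV (insert e₀ S) := Sum.inr ⟨e₀, mem_insert_self e₀ S⟩

variable (S e₀) in
def restrictV (A : Finset (G.subV (insert e₀ S))) : Finset (G.subV S) :=
  univ.filter fun y => liftV S e₀ y ∈ A

@[simp]
theorem mem_restrictV {A : Finset (G.subV (insert e₀ S))} {y : G.subV S} :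
    y ∈ restrictV S e₀ A ↔ liftV S e₀ y ∈ A := by
  simp [restrictV]

theorem liftV_injective : Function.Injective (liftV S e₀) :=
  Sum.map_injective.mpr ⟨Function.injective_id, fun _ _ h => Subtype.ext (by simpa using h)⟩

theorem eq_newVertex_or_eq_liftV (y : G.subV (insert e₀ S)) :
    y = newVertex S e₀ ∨ ∃ z, y = liftV S e₀ z := by
  rcases y with v | ⟨e, he⟩
  · exact .inr ⟨.inl v, rfl⟩
  · rcases mem_insert.mp he with rfl | he
    · exact .inl rfl
    · exact .inr ⟨.inr ⟨e, he⟩, rfl⟩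

theorem liftV_ne_newVertex (he₀ : e₀ ∉ S) (y : G.subV S) : liftV S e₀ y ≠ newVertex S e₀ := by
  rcases y with v | ⟨e, he⟩
  · simp [liftV, newVertex]
  · simp only [liftV, newVertex, Sum.map_inr, ne_eq, Sum.inr.injEq, Subtype.mk.injEq]
    rintro rfl
    exact he₀ he

theorem eq_univ_of_restrictV_eq_univ {A : Finset (G.subV (insert e₀ S))}
    (hA : restrictV S e₀ A = univ) (hnew : newVertex S e₀ ∈ A) : A = univ := by
  refine eq_univ_of_forall fun y => ?_
  rcases eq_newVertex_or_eq_liftV y with rfl | ⟨z, rfl⟩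
  · exact hnew
  · exact mem_restrictV.mp (hA ▸ mem_univ z)

theorem sum_eq_sum_restrictV_add {M : Type*} [AddCommMonoid M] (he₀ : e₀ ∉ S)
    (A : Finset (G.subV (insert e₀ S))) (F : G.subV (insert e₀ S) → M) :
    ∑ y ∈ A, F y = ∑ y ∈ restrictV S e₀ A, F (liftV S e₀ y) +
      if newVertex S e₀ ∈ A then F (newVertex S e₀) else 0 := by
  have herase : A.erase (newVertex S e₀) = (restrictV S e₀ A).map ⟨_, liftV_injective⟩ := by
    ext y
    rcases eq_newVertex_or_eq_liftV y with rfl | ⟨z, rfl⟩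
    · simp [liftV_ne_newVertex he₀]
    · simp [liftV_ne_newVertex he₀]
  split_ifs with hnew
  · rw [← add_sum_erase A F hnew, herase, sum_map, add_comm]
    rfl
  · conv_lhs => rw [← erase_eq_of_notMem hnew, herase, sum_map]
    rw [add_zero]
    rfl

theorem delta_subdiv_insert (he₀ : e₀ ∉ S) (A : Finset (G.subV (insert e₀ S))) :
    (G.subdiv (insert e₀ S)).delta A +
        xorInd (Sum.inl (G.ends1 e₀) ∈ A) (Sum.inl (G.ends2 e₀) ∈ A) =
      (G.subdiv S).delta (restrictV S e₀ A) +
        xorInd (Sum.inl (G.ends1 e₀) ∈ A) (newVertex S e₀ ∈ A) +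
        xorInd (newVertex S e₀ ∈ A) (Sum.inl (G.ends2 e₀) ∈ A) := by
  have hrest : ∑ e ∈ univ.erase e₀, subdivCrossInd (insert e₀ S) A e =
      ∑ e ∈ univ.erase e₀, subdivCrossInd S (restrictV S e₀ A) e := by
    refine sum_congr rfl fun e he => ?_
    have hne := ne_of_mem_erase he
    by_cases heS : e ∈ S
    · rw [subdivCrossInd, subdivCrossInd, dif_pos (mem_insert_of_mem heS), dif_pos heS]
      simp only [mem_restrictV]
      rfl
    · rw [subdivCrossInd, subdivCrossInd, dif_neg (by simp [hne, heS]), dif_neg heS]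
      simp only [mem_restrictV]
      rfl
  rw [delta_subdiv_eq_sum, delta_subdiv_eq_sum, ← add_sum_erase _ _ (mem_univ e₀),
    ← add_sum_erase _ _ (mem_univ e₀), hrest, subdivCrossInd, subdivCrossInd,
    dif_pos (mem_insert_self e₀ S), dif_neg he₀]
  simp only [mem_restrictV, liftV, Sum.map_inl, id_eq, newVertex]
  omega

variable (S e₀) in
def extendDiv (D : G.subV S → ℤ) (h : G.V) : G.subV (insert e₀ S) → ℤ :=
  Sum.elim (fun v => D (Sum.inl v) + if v = h then 1 else 0) fun _ => -1

theorem isPolarization_subPol {μ : G.V → ℝ} {d : ℤ} (hμ : G.IsPolarization μ d) :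
    (G.subdiv S).IsPolarization (G.subPol S μ) d := by
  unfold IsPolarization at hμ ⊢
  rw [← hμ]
  exact (Fintype.sum_sum_type _).trans (by simp [subPol])

theorem sum_extendDiv {D : G.subV S → ℤ} (hD : G.IsPseudoDivisor S D) (he₀ : e₀ ∉ S) (h : G.V)
    (A : Finset (G.subV (insert e₀ S))) :
    ∑ y ∈ A, extendDiv S e₀ D h y = ∑ y ∈ restrictV S e₀ A, D y +
      (if (Sum.inl h : G.subV (insert e₀ S)) ∈ A then 1 else 0) -
      (if newVertex S e₀ ∈ A then 1 else 0) := by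
  have hlift : ∀ y, extendDiv S e₀ D h (liftV S e₀ y) = D y + if y = Sum.inl h then 1 else 0 := by
    rintro (v | x)
    · simp [extendDiv, liftV]
    · simp [extendDiv, liftV, hD x]
  have hmem : Sum.inl h ∈ restrictV S e₀ A ↔ (Sum.inl h : G.subV (insert e₀ S)) ∈ A := mem_restrictV
  rw [sum_eq_sum_restrictV_add he₀, sum_congr rfl fun y _ => hlift y, sum_add_distrib,
    sum_ite_eq', show extendDiv S e₀ D h (newVertex S e₀) = -1 from rfl]
  simp only [hmem]
  split_ifs <;> ring

theorem beta_extendDiv {D : G.subV S → ℤ} (hD : G.IsPseudoDivisor S D) (he₀ : e₀ ∉ S)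
    (μ : G.V → ℝ) (h : G.V) (A : Finset (G.subV (insert e₀ S))) :
    (G.subdiv (insert e₀ S)).beta (G.subPol (insert e₀ S) μ) (extendDiv S e₀ D h) A =
      (G.subdiv S).beta (G.subPol S μ) D (restrictV S e₀ A) +
        (if (Sum.inl h : G.subV (insert e₀ S)) ∈ A then 1 else 0) -
        (if newVertex S e₀ ∈ A then 1 else 0) +
        ((xorInd (Sum.inl (G.ends1 e₀) ∈ A) (newVertex S e₀ ∈ A) : ℝ) +
          xorInd (newVertex S e₀ ∈ A) (Sum.inl (G.ends2 e₀) ∈ A) -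
          xorInd (Sum.inl (G.ends1 e₀) ∈ A) (Sum.inl (G.ends2 e₀) ∈ A)) / 2 := by
  have hdeg : ∑ y ∈ A, (extendDiv S e₀ D h y : ℝ) = ∑ y ∈ restrictV S e₀ A, (D y : ℝ) +
      (if (Sum.inl h : G.subV (insert e₀ S)) ∈ A then 1 else 0) -
      (if newVertex S e₀ ∈ A then 1 else 0) := by
    rw [← Int.cast_sum, sum_extendDiv hD he₀]
    push_cast
    split_ifs <;> norm_num
  have hpol : ∑ y ∈ A, G.subPol (insert e₀ S) μ y = ∑ y ∈ restrictV S e₀ A, G.subPol S μ y := by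
    rw [sum_eq_sum_restrictV_add he₀, show G.subPol _ μ (newVertex S e₀) = 0 from rfl, ite_self,
      add_zero]
    exact sum_congr rfl fun y _ => by rcases y with v | x <;> rfl
  have hδ : ((G.subdiv (insert e₀ S)).delta A : ℝ) +
      xorInd (Sum.inl (G.ends1 e₀) ∈ A) (Sum.inl (G.ends2 e₀) ∈ A) =
      (G.subdiv S).delta (restrictV S e₀ A) +
        xorInd (Sum.inl (G.ends1 e₀) ∈ A) (newVertex S e₀ ∈ A) +
        xorInd (newVertex S e₀ ∈ A) (Sum.inl (G.ends2 e₀) ∈ A) := by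
    exact_mod_cast delta_subdiv_insert he₀ A
  have hβ' : (G.subdiv (insert e₀ S)).beta (G.subPol (insert e₀ S) μ) (extendDiv S e₀ D h) A =
      ∑ y ∈ A, (extendDiv S e₀ D h y : ℝ) - ∑ y ∈ A, G.subPol (insert e₀ S) μ y +
        ((G.subdiv (insert e₀ S)).delta A : ℝ) / 2 := rfl
  have hβ : (G.subdiv S).beta (G.subPol S μ) D (restrictV S e₀ A) =
      ∑ y ∈ restrictV S e₀ A, (D y : ℝ) - ∑ y ∈ restrictV S e₀ A, G.subPol S μ y +
        ((G.subdiv S).delta (restrictV S e₀ A) : ℝ) / 2 := rfl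
  rw [hβ', hβ, hdeg, hpol]
  linarith

theorem beta_restrictV_le_beta_extendDiv {D : G.subV S → ℤ} (hD : G.IsPseudoDivisor S D)
    (he₀ : e₀ ∉ S) (μ : G.V → ℝ) {t h : G.V} (hj : G.Joins e₀ t h)
    (A : Finset (G.subV (insert e₀ S))) :
    (G.subdiv S).beta (G.subPol S μ) D (restrictV S e₀ A) -
        (if Sum.inl t ∈ A ∧ Sum.inl h ∉ A ∧ newVertex S e₀ ∈ A then 1 else 0) +
        (if Sum.inl t ∈ A ∧ Sum.inl h ∈ A ∧ newVertex S e₀ ∉ A then 2 else 0) ≤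
      (G.subdiv (insert e₀ S)).beta (G.subPol (insert e₀ S) μ) (extendDiv S e₀ D h) A := by
  rw [beta_extendDiv hD he₀]
  rcases hj with ⟨rfl, rfl⟩ | ⟨rfl, rfl⟩ <;>
  by_cases ha : (Sum.inl (G.ends1 e₀) : G.subV (insert e₀ S)) ∈ A <;>
  by_cases hb : (Sum.inl (G.ends2 e₀) : G.subV (insert e₀ S)) ∈ A <;>
  by_cases hx : newVertex S e₀ ∈ A <;>
  simp [xorInd, ha, hb, hx] <;> linarith

theorem quasistable_extendDiv {μ : G.V → ℝ} {v0 : G.V} {D : G.subV S → ℤ}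
    (hpd : G.IsPseudoDivisor S D) (he₀ : e₀ ∉ S)
    (hD : (G.subdiv S).Quasistable (G.subPol S μ) (Sum.inl v0) D)
    (hβ : (G.subdiv S).beta (G.subPol S μ) D (univ : Finset (G.subV S)) = 0) {t h : G.V}
    (hj : G.Joins e₀ t h)
    (hsep : ¬ IsSeparated (G := G.subdiv S) (G.subPol S μ) D (Sum.inl v0) ∅
      (Sum.inl t) (Sum.inl h)) :
    (G.subdiv (insert e₀ S)).Quasistable (G.subPol (insert e₀ S) μ) (Sum.inl v0)
      (extendDiv S e₀ D h) := by
  intro (A : Finset (G.subV (insert e₀ S))) hA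
  have hbound := beta_restrictV_le_beta_extendDiv hpd he₀ μ hj A
  have hv0 : Sum.inl v0 ∈ restrictV S e₀ A ↔ Sum.inl v0 ∈ A := mem_restrictV
  by_cases hfull : restrictV S e₀ A = univ
  · have hx : newVertex S e₀ ∉ A := fun hx => hA.ne (eq_univ_of_restrictV_eq_univ hfull hx)
    have hmem : ∀ v : G.V, (Sum.inl v : G.subV (insert e₀ S)) ∈ A := fun v =>
      mem_restrictV.mp (hfull ▸ mem_univ (Sum.inl v))
    rw [hfull, hβ, if_neg fun h' => hx h'.2.2, if_pos ⟨hmem t, hmem h, hx⟩] at hbound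
    exact ⟨by linarith, fun _ => by linarith⟩
  have hprop : restrictV S e₀ A ⊂ univ := ssubset_univ_iff.mpr hfull
  by_cases hbad : Sum.inl t ∈ A ∧ Sum.inl h ∉ A ∧ newVertex S e₀ ∈ A
  · have hsep' := one_le_beta_of_not_isSeparated hsep hprop (mem_restrictV.mpr hbad.1)
      (fun h' => hbad.2.1 (mem_restrictV.mp h'))
    rw [if_pos hbad, if_neg fun h' => hbad.2.1 h'.2.1] at hbound
    exact ⟨by linarith [hsep'.1], fun hv => by linarith [hsep'.2 (hv0.mpr hv)]⟩
  · have hqs := hD _ hprop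
    have htwo : (0 : ℝ) ≤ if Sum.inl t ∈ A ∧ Sum.inl h ∈ A ∧ newVertex S e₀ ∉ A then 2 else 0 := by
      split_ifs <;> norm_num
    rw [if_neg hbad] at hbound
    exact ⟨by linarith [hqs.1], fun hv => by linarith [hqs.2 (hv0.mpr hv)]⟩

theorem qsPseudo_extendDiv {μ : G.V → ℝ} {v0 : G.V} {d : ℤ} {D : G.subV S → ℤ}
    (hx : G.QSPseudo μ v0 d S D) (hμ : G.IsPolarization μ d) (he₀ : e₀ ∉ S) {t h : G.V}
    (hj : G.Joins e₀ t h)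
    (hsep : ¬ IsSeparated (G := G.subdiv S) (G.subPol S μ) D (Sum.inl v0) ∅
      (Sum.inl t) (Sum.inl h)) :
    G.QSPseudo μ v0 d (insert e₀ S) (extendDiv S e₀ D h) := by
  obtain ⟨hpd, hdeg, hD⟩ := hx
  refine ⟨fun _ => rfl, ?_, quasistable_extendDiv hpd he₀ hD
    (beta_univ_eq_zero (G := G.subdiv S) (isPolarization_subPol hμ) hdeg) hj hsep⟩
  have hrestrictV_univ : restrictV S e₀ univ = univ := by ext; simp
  rw [← hdeg, sum_extendDiv hpd he₀, hrestrictV_univ, if_pos (mem_univ _), if_pos (mem_univ _)]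
  ring

theorem pdLe_extendDiv {D : G.subV S → ℤ} (hpd : G.IsPseudoDivisor S D) (he₀ : e₀ ∉ S)
    {t h : G.V} (hj : G.Joins e₀ t h) :
    PDLe (⟨S, D⟩ : G.PD) ⟨insert e₀ S, extendDiv S e₀ D h⟩ := by
  have hdiff : insert e₀ S \ S = {e₀} := by
    rw [insert_sdiff_of_notMem _ he₀, sdiff_self, bot_eq_empty, insert_empty]
  refine ⟨subset_insert e₀ S, fun _ => h, fun e he => ?_, fun v => ?_, fun e he => hpd ⟨e, he⟩⟩
  · rw [hdiff, mem_singleton] at he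
    subst he
    rcases hj with ⟨-, rfl⟩ | ⟨rfl, -⟩
    exacts [.inr rfl, .inl rfl]
  · simp only [extendDiv, Sum.elim_inl, Sum.elim_inr]
    rw [sum_const, card_attach, hdiff, card_singleton, one_smul]
    by_cases hv : v = h
    · simp [hv]
    · simp [hv, Ne.symm hv]

theorem exists_joins_not_isSeparated_subdiv {μ : G.subV S → ℝ} {D : G.subV S → ℤ}
    {v0 : G.subV S} (hD : (G.subdiv S).Quasistable μ v0 D)
    (hβ : (G.subdiv S).beta μ D univ = 0) (he₀ : e₀ ∉ S)
    (hcyc : ReflTransGen (G.Step ↑(Sᶜ.erase e₀)) (G.ends1 e₀) (G.ends2 e₀)) :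
    ∃ e ∉ S, ∃ t h, G.Joins e t h ∧
      ¬ IsSeparated (G := G.subdiv S) μ D v0 ∅ (Sum.inl t) (Sum.inl h) := by
  have hjoins : ∀ (x : {e // e ∉ S}) (a b : G.V), G.Joins x.1 a b →
      (G.subdiv S).Joins (Sum.inl x) (Sum.inl a) (Sum.inl b) := by
    rintro x a b (⟨rfl, rfl⟩ | ⟨rfl, rfl⟩)
    exacts [.inl ⟨rfl, rfl⟩, .inr ⟨rfl, rfl⟩]
  have hlift : ReflTransGen ((G.subdiv S).Step (Set.range Sum.inl \ {Sum.inl ⟨e₀, he₀⟩}))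
      (Sum.inl (G.ends1 e₀)) (Sum.inl (G.ends2 e₀)) := by
    refine ReflTransGen.lift Sum.inl (fun a b ⟨e, he, hj⟩ => ?_) _ _ hcyc
    obtain ⟨heS, hne⟩ : e ∉ S ∧ e ≠ e₀ := by simpa using he
    exact ⟨Sum.inl ⟨e, heS⟩, ⟨⟨_, rfl⟩, fun h' => hne (congrArg Subtype.val
      (Sum.inl_injective (Set.mem_singleton_iff.mp h')))⟩, hjoins ⟨e, heS⟩ a b hj⟩
  obtain ⟨_, ⟨x, rfl⟩, t, v, hj, hsep⟩ := exists_joins_not_isSeparated hD hβ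
    (Set.mem_range_self (⟨e₀, he₀⟩ : {e // e ∉ S})) (hjoins ⟨e₀, he₀⟩ _ _ (joins_ends e₀)) hlift
  rcases hj with ⟨rfl, rfl⟩ | ⟨rfl, rfl⟩
  exacts [⟨x.1, x.2, _, _, joins_ends x.1, hsep⟩, ⟨x.1, x.2, _, _, (joins_ends x.1).symm, hsep⟩]

end Subdivision

end Multigraph

theorem quasistable_extend_one_edge_general (G : Multigraph)
    (d : ℤ) (μ : G.V → ℝ) (hμ : G.IsPolarization μ d) (v0 : G.V)
    (x : G.PD) (hx : x ∈ G.QDSet μ v0 d) (hcard : x.1.card < G.firstBetti) :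
    ∃ y : G.PD, y ∈ G.QDSet μ v0 d ∧ x.1 ⊆ y.1 ∧ y.1.card = x.1.card + 1 ∧
      Multigraph.PDLe x y := by
  obtain ⟨S, D⟩ := x
  have hx : G.QSPseudo μ v0 d S D := hx
  have hβ := beta_univ_eq_zero (G := G.subdiv S) (isPolarization_subPol hμ) hx.2.1
  have hV : Fintype.card G.V ≤ Sᶜ.card := by
    have := Finset.card_le_univ S
    change S.card < Fintype.card G.E + 1 - Fintype.card G.V at hcard
    rw [Finset.card_compl]
    omega
  have : Nonempty G.V := ⟨v0⟩
  obtain ⟨e₀, he₀, hcyc⟩ := exists_reflTransGen_erase_of_card_le Sᶜ hV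
  obtain ⟨e, heS, t, h, hj, hsep⟩ :=
    exists_joins_not_isSeparated_subdiv hx.2.2 hβ (Finset.mem_compl.mp he₀) hcyc
  exact ⟨⟨insert e S, extendDiv S e D h⟩, qsPseudo_extendDiv hx hμ heS hj hsep,
    Finset.subset_insert e S, Finset.card_insert_of_notMem heS, pdLe_extendDiv hx.1 heS hj⟩

/-- If `(E,D)` is a `(v0,μ)`-quasistable degree-`d` pseudo-divisor on a
connected graph `Γ` with `|E| < b₁(Γ)`, then there is a `(v0,μ)`-quasistable degree-`d`
pseudo-divisor `(E',D')` with `E ⊆ E'`, `|E'| = |E| + 1`, specializing to `(E,D)`. -/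
theorem quasistable_extend_one_edge (G : Multigraph) (hconn : G.Connected)
    (d : ℤ) (μ : G.V → ℝ) (hμ : G.IsPolarization μ d) (v0 : G.V)
    (x : G.PD) (hx : x ∈ G.QDSet μ v0 d) (hcard : x.1.card < G.firstBetti) :
    ∃ y : G.PD, y ∈ G.QDSet μ v0 d ∧ x.1 ⊆ y.1 ∧ y.1.card = x.1.card + 1 ∧
      Multigraph.PDLe x y :=
  quasistable_extend_one_edge_general G d μ hμ v0 x hx hcard
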